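/- Let f : ℝ^d × ℝ^d → ℝ be l-smooth and μ-strongly concave in y, with Φ(x) = max_y f(x,y), ∇Φ (l+κl)-Lipschitz, κ = l/μ. For the update x⁺ = x − η₁ h with any vector h: Φ(x⁺) − Φ(x) ≤ −(η₁/2)‖∇Φ(x)‖² − (η₁/2)(1 − (κl+l)η₁)‖h‖² + 2η₁lκ(Φ(x) − f(x,y)) + η₁‖h − ∇_x f(x,y)‖². -/

import Mathlib

/-!
The descent lemma for the `(l + κ l)`-smooth function `Φ` bounds the step `x - η₁ • h` by
`-(η₁/2)‖∇Φ x‖² - (η₁/2)(1 - (κl + l)η₁)‖h‖² + (η₁/2)‖∇Φ x - h‖²`. The error `‖∇Φ x - h‖²` is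
split through `∇ₓ f(x, y)` into the variance term `2‖h - ∇ₓ f(x, y)‖²` and twice the bias
`‖∇ₓ f(x, y) - ∇ₓ f(x, y*(x))‖² ≤ l² ‖y - y*(x)‖²`, and strong concavity turns `‖y - y*(x)‖²`
into `(2/μ)(Φ x - f(x, y))`.
-/

open scoped RealInnerProductSpace

noncomputable def gradx {d : ℕ}
    (f : EuclideanSpace ℝ (Fin d) → EuclideanSpace ℝ (Fin d) → ℝ)
    (x y : EuclideanSpace ℝ (Fin d)) : EuclideanSpace ℝ (Fin d) :=
  gradient (fun x' => f x' y) x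

noncomputable def grady {d : ℕ}
    (f : EuclideanSpace ℝ (Fin d) → EuclideanSpace ℝ (Fin d) → ℝ)
    (x y : EuclideanSpace ℝ (Fin d)) : EuclideanSpace ℝ (Fin d) :=
  gradient (f x) y

open Filter Set Topology

section Descent

variable {E : Type*} [NormedAddCommGroup E] [InnerProductSpace ℝ E] [CompleteSpace E]
  {Φ : E → ℝ} {L : ℝ}

theorem HasGradientAt.hasDerivAt_comp_add_smul {g a v : E} {t : ℝ}
    (hΦ : HasGradientAt Φ g (a + t • v)) :
    HasDerivAt (fun s : ℝ => Φ (a + s • v)) ⟪g, v⟫ t := by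
  have hline : HasDerivAt (fun s : ℝ => a + s • v) v t := by
    simpa using ((hasDerivAt_id t).smul_const v).const_add a
  have := hΦ.hasFDerivAt.comp_hasDerivAt t hline
  simp only [InnerProductSpace.toDual_apply_apply] at this
  exact this

theorem le_add_inner_gradient_add_of_lipschitz_gradient (hΦ : Differentiable ℝ Φ)
    (hlip : ∀ a b, ‖gradient Φ a - gradient Φ b‖ ≤ L * ‖a - b‖) (a b : E) :
    Φ b ≤ Φ a + ⟪gradient Φ a, b - a⟫ + L / 2 * ‖b - a‖ ^ 2 := by
  set v := b - a
  -- the gap between `Φ` and its quadratic upper model along the segment; `g' ≤ 0` on `[0, 1]`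
  let g : ℝ → ℝ := fun t => Φ (a + t • v) - t * ⟪gradient Φ a, v⟫ - L / 2 * t ^ 2 * ‖v‖ ^ 2
  have hg : ∀ t,
      HasDerivAt g (⟪gradient Φ (a + t • v) - gradient Φ a, v⟫ - L * t * ‖v‖ ^ 2) t := by
    intro t
    refine ((((hΦ _).hasGradientAt.hasDerivAt_comp_add_smul).sub
      ((hasDerivAt_id t).mul_const ⟪gradient Φ a, v⟫)).sub
      (((hasDerivAt_pow 2 t).const_mul (L / 2)).mul_const (‖v‖ ^ 2))).congr_deriv ?_
    rw [inner_sub_left]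
    simp only [Nat.cast_ofNat]
    ring
  have hanti : AntitoneOn g (Icc 0 1) := by
    refine antitoneOn_of_deriv_nonpos (convex_Icc 0 1)
      (fun t _ => (hg t).continuousAt.continuousWithinAt)
      (fun t _ => (hg t).differentiableAt.differentiableWithinAt) fun t ht => ?_
    rw [interior_Icc] at ht
    rw [(hg t).deriv, sub_nonpos]
    calc ⟪gradient Φ (a + t • v) - gradient Φ a, v⟫
        ≤ ‖gradient Φ (a + t • v) - gradient Φ a‖ * ‖v‖ := real_inner_le_norm _ _
      _ ≤ L * ‖t • v‖ * ‖v‖ := by gcongr; simpa using hlip (a + t • v) a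
      _ = L * t * ‖v‖ ^ 2 := by rw [norm_smul, Real.norm_of_nonneg ht.1.le]; ring
  have hg0 : g 0 = Φ a := by simp [g]
  have hg1 : g 1 = Φ b - ⟪gradient Φ a, b - a⟫ - L / 2 * ‖b - a‖ ^ 2 := by simp [g, v]
  have := hanti (left_mem_Icc.2 zero_le_one) (right_mem_Icc.2 zero_le_one) zero_le_one
  linarith

theorem sub_smul_sub_le_of_lipschitz_gradient (hΦ : Differentiable ℝ Φ)
    (hlip : ∀ a b, ‖gradient Φ a - gradient Φ b‖ ≤ L * ‖a - b‖) (η : ℝ) (x h : E) :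
    Φ (x - η • h) - Φ x ≤ -(η / 2) * ‖gradient Φ x‖ ^ 2 - (η / 2) * (1 - L * η) * ‖h‖ ^ 2
      + η / 2 * ‖gradient Φ x - h‖ ^ 2 := by
  have hdescent := le_add_inner_gradient_add_of_lipschitz_gradient hΦ hlip x (x - η • h)
  rw [sub_sub_cancel_left, inner_neg_right, real_inner_smul_right, norm_neg, norm_smul,
    Real.norm_eq_abs, mul_pow, sq_abs] at hdescent
  linear_combination hdescent - η / 2 * norm_sub_sq_real (gradient Φ x) h

end Descent

theorem StrongConcaveOn.add_sq_le_of_isMaxOn {E : Type*} [NormedAddCommGroup E]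
    [NormedSpace ℝ E] {s : Set E} {f : E → ℝ} {m : ℝ} {x₀ y : E}
    (hf : StrongConcaveOn s m f) (hmax : IsMaxOn f s x₀) (hx₀ : x₀ ∈ s) (hy : y ∈ s) :
    f y + m / 2 * ‖y - x₀‖ ^ 2 ≤ f x₀ := by
  have hineq : ∀ t ∈ Ioo (0 : ℝ) 1, f y - f x₀ + (1 - t) * (m / 2 * ‖y - x₀‖ ^ 2) ≤ 0 := by
    intro t ht
    have h1t : 0 ≤ 1 - t := sub_nonneg.2 ht.2.le
    have hconc := hf.2 hy hx₀ ht.1.le h1t (add_sub_cancel t 1)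
    have hle := isMaxOn_iff.1 hmax _ (hf.1 hy hx₀ ht.1.le h1t (add_sub_cancel t 1))
    simp only [smul_eq_mul] at hconc
    refine nonpos_of_mul_nonpos_right ?_ ht.1
    linear_combination hconc + hle
  have hlim : Tendsto (fun t : ℝ => f y - f x₀ + (1 - t) * (m / 2 * ‖y - x₀‖ ^ 2)) (𝓝[>] 0)
      (𝓝 (f y - f x₀ + m / 2 * ‖y - x₀‖ ^ 2)) := by
    have hcont : Continuous fun t : ℝ => f y - f x₀ + (1 - t) * (m / 2 * ‖y - x₀‖ ^ 2) := by
      fun_prop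
    simpa using (hcont.tendsto 0).mono_left nhdsWithin_le_nhds
  have := le_of_tendsto hlim (eventually_of_mem (Ioo_mem_nhdsGT zero_lt_one) hineq)
  linarith

theorem Phi_one_step_bound_general {d : ℕ} (l μ η₁ : ℝ) (hμ : 0 < μ) (hη₁ : 0 < η₁)
    (f : EuclideanSpace ℝ (Fin d) → EuclideanSpace ℝ (Fin d) → ℝ)
    (hsmooth_x : ∀ x₁ y₁ x₂ y₂,
      ‖gradx f x₁ y₁ - gradx f x₂ y₂‖ ≤ l * (‖x₁ - x₂‖ + ‖y₁ - y₂‖))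
    (hconc : ∀ x, ConcaveOn ℝ Set.univ (fun y => f x y + (μ / 2) * ‖y‖ ^ 2))
    (ystar : EuclideanSpace ℝ (Fin d) → EuclideanSpace ℝ (Fin d))
    (hmax : ∀ x, IsMaxOn (f x) Set.univ (ystar x))
    (Φ : EuclideanSpace ℝ (Fin d) → ℝ) (hΦ : ∀ x, Φ x = f x (ystar x))
    (hgradΦ : ∀ x, HasGradientAt Φ (gradx f x (ystar x)) x)
    (hLipΦ : ∀ x₁ x₂, ‖gradient Φ x₁ - gradient Φ x₂‖ ≤ (l + (l / μ) * l) * ‖x₁ - x₂‖) :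
    ∀ x y (h : EuclideanSpace ℝ (Fin d)),
      Φ (x - η₁ • h) - Φ x ≤
        -(η₁ / 2) * ‖gradient Φ x‖ ^ 2
          - (η₁ / 2) * (1 - ((l / μ) * l + l) * η₁) * ‖h‖ ^ 2
          + 2 * η₁ * l * (l / μ) * (Φ x - f x y)
          + η₁ * ‖h - gradx f x y‖ ^ 2 := by
  intro x y h
  have hstep := sub_smul_sub_le_of_lipschitz_gradient
    (fun z => (hgradΦ z).differentiableAt) hLipΦ η₁ x h
  have hgrowth : f x y + μ / 2 * ‖y - ystar x‖ ^ 2 ≤ Φ x := hΦ x ▸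
    (strongConcaveOn_iff_convex.2 (hconc x)).add_sq_le_of_isMaxOn (hmax x) trivial trivial
  have hbias : ‖gradx f x y - gradient Φ x‖ ≤ l * ‖y - ystar x‖ := by
    simpa [(hgradΦ x).gradient] using hsmooth_x x y x (ystar x)
  have hbias_sq : ‖gradx f x y - gradient Φ x‖ ^ 2 ≤ 2 * l * (l / μ) * (Φ x - f x y) :=
    calc ‖gradx f x y - gradient Φ x‖ ^ 2 ≤ (l * ‖y - ystar x‖) ^ 2 := by gcongr
      _ = l ^ 2 / μ * (μ * ‖y - ystar x‖ ^ 2) := by field_simp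
      _ ≤ l ^ 2 / μ * (2 * (Φ x - f x y)) :=
        mul_le_mul_of_nonneg_left (by linarith) (by positivity)
      _ = 2 * l * (l / μ) * (Φ x - f x y) := by ring
  have hsplit : ‖gradient Φ x - h‖ ^ 2
      ≤ 2 * (‖h - gradx f x y‖ ^ 2 + ‖gradx f x y - gradient Φ x‖ ^ 2) :=
    calc ‖gradient Φ x - h‖ ^ 2 = ‖h - gradient Φ x‖ ^ 2 := by rw [norm_sub_rev]
      _ ≤ (‖h - gradx f x y‖ + ‖gradx f x y - gradient Φ x‖) ^ 2 := by
        gcongr; exact norm_sub_le_norm_sub_add_norm_sub _ _ _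
      _ ≤ _ := add_sq_le
  linear_combination hstep + η₁ / 2 * hsplit + η₁ * hbias_sq

theorem Phi_one_step_bound {d : ℕ} (l μ η₁ : ℝ) (hl : 0 < l) (hμ : 0 < μ) (hη₁ : 0 < η₁)
    (f : EuclideanSpace ℝ (Fin d) → EuclideanSpace ℝ (Fin d) → ℝ)
    (hdx : ∀ y, Differentiable ℝ (fun x => f x y))
    (hdy : ∀ x, Differentiable ℝ (f x))
    (hsmooth_x : ∀ x₁ y₁ x₂ y₂,
      ‖gradx f x₁ y₁ - gradx f x₂ y₂‖ ≤ l * (‖x₁ - x₂‖ + ‖y₁ - y₂‖))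
    (hsmooth_y : ∀ x₁ y₁ x₂ y₂,
      ‖grady f x₁ y₁ - grady f x₂ y₂‖ ≤ l * (‖x₁ - x₂‖ + ‖y₁ - y₂‖))
    (hconc : ∀ x, ConcaveOn ℝ Set.univ (fun y => f x y + (μ / 2) * ‖y‖ ^ 2))
    (ystar : EuclideanSpace ℝ (Fin d) → EuclideanSpace ℝ (Fin d))
    (hmax : ∀ x, IsMaxOn (f x) Set.univ (ystar x))
    (Φ : EuclideanSpace ℝ (Fin d) → ℝ) (hΦ : ∀ x, Φ x = f x (ystar x))
    (hgradΦ : ∀ x, HasGradientAt Φ (gradx f x (ystar x)) x)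
    (hLipΦ : ∀ x₁ x₂, ‖gradient Φ x₁ - gradient Φ x₂‖ ≤ (l + (l / μ) * l) * ‖x₁ - x₂‖) :
    ∀ x y (h : EuclideanSpace ℝ (Fin d)),
      Φ (x - η₁ • h) - Φ x ≤
        -(η₁ / 2) * ‖gradient Φ x‖ ^ 2
          - (η₁ / 2) * (1 - ((l / μ) * l + l) * η₁) * ‖h‖ ^ 2
          + 2 * η₁ * l * (l / μ) * (Φ x - f x y)
          + η₁ * ‖h - gradx f x y‖ ^ 2 :=
  Phi_one_step_bound_general l μ η₁ hμ hη₁ f hsmooth_x hconc ystar hmax Φ hΦ hgradΦ hLipΦ
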